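/- arXiv:2102.05628 — 4 statements merged into one kernel-verified Lean document; each statement's English description precedes it below -/
import Mathlib

section
/- For every natural number n ≥ 1 and all nonnegative reals z_1,…,z_n, one has (Σ_{i=1}^n z_i e^{-z_i²}) / (1 + Σ_{i=1}^n e^{-z_i²}) ≤ √(ln n + 1/(2e)). -/
/-- For `n ≥ 1` and nonnegative reals `z₁,…,zₙ`,
`(Σ zᵢ e^{-zᵢ²}) / (1 + Σ e^{-zᵢ²}) ≤ √(ln n + 1/(2e))`. -/
theorem stmt1 (n : ℕ) (hn : 1 ≤ n) (z : Fin n → ℝ) (hz : ∀ i, 0 ≤ z i) :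
    (∑ i, z i * Real.exp (-(z i ^ 2))) / (1 + ∑ i, Real.exp (-(z i ^ 2)))
      ≤ Real.sqrt (Real.log n + 1 / (2 * Real.exp 1)) := by
  set M := Real.sqrt (Real.log n + 1 / (2 * Real.exp 1)) with hMdef
  have hepos : (0:ℝ) < Real.exp 1 := Real.exp_pos 1
  have hlog : 0 ≤ Real.log n := Real.log_nonneg (by exact_mod_cast hn)
  have harg : 0 < Real.log n + 1 / (2 * Real.exp 1) := by positivity
  have hM2 : M ^ 2 = Real.log n + 1 / (2 * Real.exp 1) := Real.sq_sqrt harg.le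
  have hMpos : 0 < M := Real.sqrt_pos.mpr harg
  have hnpos : (0:ℝ) < n := by exact_mod_cast hn
  -- key pointwise bound
  have key : ∀ x : ℝ, 0 ≤ x →
      x * Real.exp (-(x^2)) ≤ M * Real.exp (-(x^2)) + M / n := by
    intro x hx
    rcases le_or_gt x M with h | h
    · have h1 : x * Real.exp (-(x^2)) ≤ M * Real.exp (-(x^2)) :=
        mul_le_mul_of_nonneg_right h (Real.exp_pos _).le
      have h2 : 0 ≤ M / n := by positivity
      linarith
    · set t := x - M with htdef
      have htpos : 0 < t := sub_pos.mpr h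
      -- exp(-x^2) = exp(-M^2) * exp(-(x^2 - M^2))
      have hsplit : Real.exp (-(x^2)) = Real.exp (-(M^2)) * Real.exp (-(x^2 - M^2)) := by
        rw [← Real.exp_add]; ring_nf
      set E := Real.exp (-(1 / (2 * Real.exp 1))) with hEdef
      have hEpos : 0 < E := Real.exp_pos _
      have hE1 : E ≤ 1 := Real.exp_le_one_iff.mpr (neg_nonpos.mpr (by positivity))
      have hexpM : Real.exp (-(M^2)) = (1 / n) * E := by
        rw [hM2, hEdef, neg_add, Real.exp_add, Real.exp_neg, Real.exp_log hnpos]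
        ring
      -- x^2 - M^2 ≥ 2*M*t
      have hgap : 2 * M * t ≤ x^2 - M^2 := by nlinarith
      have hmono : Real.exp (-(x^2 - M^2)) ≤ Real.exp (-(2 * M * t)) :=
        Real.exp_le_exp.mpr (by linarith)
      -- t * exp(-(2Mt)) ≤ 1/(2*M*e)  via  u * exp(-u) ≤ 1/e
      have hu : 2 * M * t ≤ Real.exp (2 * M * t) / Real.exp 1 := by
        have := Real.add_one_le_exp (2 * M * t - 1)
        have hxe : Real.exp (2 * M * t - 1) = Real.exp (2 * M * t) / Real.exp 1 := by
          rw [Real.exp_sub]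
        linarith [hxe ▸ this]
      have hue : 2 * M * t * Real.exp (-(2 * M * t)) ≤ 1 / Real.exp 1 := by
        have hEx : 0 < Real.exp (2 * M * t) := Real.exp_pos _
        have h3 : 2 * M * t * Real.exp 1 ≤ Real.exp (2 * M * t) :=
          (le_div_iff₀ hepos).mp hu
        rw [Real.exp_neg, inv_eq_one_div, mul_one_div, div_le_div_iff₀ hEx hepos]
        linarith
      have hte : t * Real.exp (-(2 * M * t)) ≤ 1 / (2 * M * Real.exp 1) := by
        rw [le_div_iff₀ (by positivity : (0:ℝ) < 2 * M * Real.exp 1)]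
        have hmul := mul_le_mul_of_nonneg_right hue hepos.le
        have hone : (1 / Real.exp 1) * Real.exp 1 = 1 := by field_simp
        nlinarith [hmul, hone]
      -- combine
      have hcomb : t * Real.exp (-(x^2)) ≤ M / n := by
        rw [hsplit, hexpM]
        have h1 : t * Real.exp (-(x^2 - M^2)) ≤ 1 / (2 * M * Real.exp 1) := by
          calc t * Real.exp (-(x^2 - M^2)) ≤ t * Real.exp (-(2 * M * t)) :=
                mul_le_mul_of_nonneg_left hmono htpos.le
            _ ≤ 1 / (2 * M * Real.exp 1) := hte
        have hMM : 1 / (2 * Real.exp 1) ≤ M ^ 2 := by rw [hM2]; linarith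
        have h2 : 1 / (2 * M * Real.exp 1) ≤ M := by
          rw [div_le_iff₀ (by positivity : (0:ℝ) < 2 * M * Real.exp 1)]
          have h4 := mul_le_mul_of_nonneg_right hMM
            (by positivity : (0:ℝ) ≤ 2 * Real.exp 1)
          have h5 : 1 / (2 * Real.exp 1) * (2 * Real.exp 1) = 1 := by field_simp
          nlinarith [h4, h5]
        calc t * (1 / ↑n * E * Real.exp (-(x^2 - M^2)))
            = (E * (1 / ↑n)) * (t * Real.exp (-(x^2 - M^2))) := by ring
          _ ≤ (1 * (1 / ↑n)) * M := by
              apply mul_le_mul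
              · apply mul_le_mul_of_nonneg_right hE1; positivity
              · calc t * Real.exp (-(x^2 - M^2)) ≤ 1 / (2 * M * Real.exp 1) := h1
                  _ ≤ M := h2
              · positivity
              · positivity
          _ = M / n := by ring
      have hring : x * Real.exp (-(x^2)) - M * Real.exp (-(x^2))
          = t * Real.exp (-(x^2)) := by rw [htdef]; ring
      linarith [hcomb, hring]
  -- sum the pointwise bound
  have hsum : ∑ i, z i * Real.exp (-(z i ^ 2))
      ≤ M * (1 + ∑ i, Real.exp (-(z i ^ 2))) := by
    have h1 : ∑ i, z i * Real.exp (-(z i ^ 2))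
        ≤ ∑ i : Fin n, (M * Real.exp (-(z i ^ 2)) + M / n) :=
      Finset.sum_le_sum fun i _ => key (z i) (hz i)
    have h2 : ∑ i : Fin n, (M * Real.exp (-(z i ^ 2)) + M / n)
        = M * (∑ i, Real.exp (-(z i ^ 2))) + M := by
      rw [Finset.sum_add_distrib, ← Finset.mul_sum, Finset.sum_const,
        Finset.card_univ, Fintype.card_fin, nsmul_eq_mul]
      field_simp
    rw [h2] at h1
    linarith
  have hden : 0 < 1 + ∑ i, Real.exp (-(z i ^ 2)) := by
    have : (0:ℝ) ≤ ∑ i, Real.exp (-(z i ^ 2)) :=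
      Finset.sum_nonneg fun i _ => (Real.exp_pos _).le
    linarith
  rw [div_le_iff₀ hden]
  linarith [hsum]
end

section
/- Let K be a Markov kernel on a metric space E (acting on measures by μK(A) = ∫ K(x,A) dμ(x)). Then the Wasserstein contraction coefficient sup_{μ≠ν} W₁(μK, νK)/W₁(μ,ν) over probability measures with finite first moments equals sup_{x≠y} W₁(K(x,·), K(y,·))/d(x,y). -/
/-!
If `W₁(K x, K y) ≤ C d(x, y)` for all points, then by duality `x ↦ ∫ g dK(x)` is `C`-Lipschitz for
every 1-Lipschitz `g`, and integrating it against `μ` and `ν` gives `W₁(μK, νK) ≤ C W₁(μ, ν)`.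
Conversely, Dirac masses satisfy `δₓK = K(x, ·)` and `W₁(δₓ, δ_y) = d(x, y)`, so the supremum over
measures dominates the supremum over pairs of points.
-/

open MeasureTheory ProbabilityTheory
open scoped ENNReal NNReal

/-- 1-Wasserstein distance via Kantorovich duality. -/
noncomputable def W1 {α : Type*} [MetricSpace α] [MeasurableSpace α]
    (μ ν : Measure α) : ℝ≥0∞ :=
  ⨆ g : {f : α → ℝ // LipschitzWith 1 f},
    ENNReal.ofReal |(∫ x, g.val x ∂μ) - ∫ x, g.val x ∂ν|

section W1

variable {α : Type*} [MetricSpace α] [MeasurableSpace α]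

lemma W1_eq_iSup_edist (μ ν : Measure α) :
    W1 μ ν = ⨆ g : {f : α → ℝ // LipschitzWith 1 f}, edist (∫ x, g.1 x ∂μ) (∫ x, g.1 x ∂ν) := by
  simp only [W1, edist_dist, Real.dist_eq]

lemma W1_self (μ : Measure α) : W1 μ μ = 0 := by
  simp [W1_eq_iSup_edist]

lemma edist_integral_le_W1 (μ ν : Measure α) {g : α → ℝ} (hg : LipschitzWith 1 g) :
    edist (∫ x, g x ∂μ) (∫ x, g x ∂ν) ≤ W1 μ ν := by
  rw [W1_eq_iSup_edist]
  exact le_iSup (fun g : {f : α → ℝ // LipschitzWith 1 f} =>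
    edist (∫ x, g.1 x ∂μ) (∫ x, g.1 x ∂ν)) ⟨g, hg⟩

lemma edist_integral_le_mul_W1 (μ ν : Measure α) [IsProbabilityMeasure μ]
    [IsProbabilityMeasure ν] {C : ℝ≥0} {g : α → ℝ} (hg : LipschitzWith C g) :
    edist (∫ x, g x ∂μ) (∫ x, g x ∂ν) ≤ C * W1 μ ν := by
  rcases eq_or_ne C 0 with rfl | hC
  · obtain ⟨x₀⟩ := nonempty_of_isProbabilityMeasure μ
    have hconst : g = fun _ => g x₀ := funext fun x => by simpa using hg x x₀
    rw [hconst]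
    simp
  · have hg' : LipschitzWith 1 (fun x => (C : ℝ)⁻¹ * g x) := by
      have := (lipschitzWith_smul (C : ℝ)⁻¹).comp hg
      rwa [nnnorm_inv, NNReal.nnnorm_eq, inv_mul_cancel₀ hC] at this
    have hC' : (C : ℝ) ≠ 0 := by exact_mod_cast hC
    calc edist (∫ x, g x ∂μ) (∫ x, g x ∂ν)
        = edist ((C : ℝ) * ∫ x, (C : ℝ)⁻¹ * g x ∂μ) ((C : ℝ) * ∫ x, (C : ℝ)⁻¹ * g x ∂ν) := by
          simp only [← integral_const_mul, mul_inv_cancel_left₀ hC']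
      _ = C * edist (∫ x, (C : ℝ)⁻¹ * g x ∂μ) (∫ x, (C : ℝ)⁻¹ * g x ∂ν) := by
          rw [← smul_eq_mul, ← smul_eq_mul, edist_smul₀, NNReal.nnnorm_eq, ENNReal.smul_def,
            smul_eq_mul]
      _ ≤ C * W1 μ ν := by gcongr; exact edist_integral_le_W1 μ ν hg'

lemma W1_dirac [MeasurableSingletonClass α] (x y : α) :
    W1 (Measure.dirac x) (Measure.dirac y) = edist x y := by
  simp only [W1_eq_iSup_edist, integral_dirac]
  refine le_antisymm (iSup_le fun g => by simpa using g.2 x y) ?_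
  simpa [edist_dist, Real.enorm_eq_ofReal_abs] using
    le_iSup (fun g : {f : α → ℝ // LipschitzWith 1 f} => edist (g.1 x) (g.1 y))
      ⟨fun z => dist z y, LipschitzWith.dist_left y⟩

end W1

lemma integrable_of_lipschitzWith {α : Type*} [PseudoMetricSpace α] [MeasurableSpace α]
    [OpensMeasurableSpace α] {μ : Measure α} [IsFiniteMeasure μ] {x₀ : α}
    (hμ : Integrable (fun x => dist x x₀) μ) {C : ℝ≥0} {g : α → ℝ} (hg : LipschitzWith C g) :
    Integrable g μ := by
  refine ((integrable_const ‖g x₀‖).add (hμ.const_mul C)).mono'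
    hg.continuous.aestronglyMeasurable (ae_of_all _ fun x => ?_)
  calc ‖g x‖ ≤ ‖g x₀‖ + ‖g x - g x₀‖ := norm_le_norm_add_norm_sub' _ _
    _ ≤ ‖g x₀‖ + C * dist x x₀ := by gcongr; exact hg.dist_le_mul x x₀

lemma le_iSup_div_edist_mul_edist {α : Type*} [MetricSpace α] (f : α → α → ℝ≥0∞)
    (hf : ∀ x, f x x = 0) (x y : α) :
    f x y ≤ (⨆ q : {p : α × α // p.1 ≠ p.2}, f q.1.1 q.1.2 / edist q.1.1 q.1.2) * edist x y := by
  rcases eq_or_ne x y with rfl | hxy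
  · simp [hf]
  · rw [← ENNReal.div_le_iff (edist_pos.2 hxy |>.ne') (edist_ne_top x y)]
    exact le_iSup (fun q : {p : α × α // p.1 ≠ p.2} => f q.1.1 q.1.2 / edist q.1.1 q.1.2)
      ⟨(x, y), hxy⟩

section Kernel

variable {α β : Type*} [MetricSpace α] [MeasurableSpace α] [MetricSpace β] [MeasurableSpace β]
  {K : Kernel α β} {C : ℝ≥0}

lemma lipschitzWith_integral_kernel (hC : ∀ x y, W1 (K x) (K y) ≤ C * edist x y)
    {g : β → ℝ} (hg : LipschitzWith 1 g) : LipschitzWith C (fun x => ∫ y, g y ∂K x) :=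
  fun x y => (edist_integral_le_W1 _ _ hg).trans (hC x y)

variable [OpensMeasurableSpace α] [OpensMeasurableSpace β] [IsMarkovKernel K]

lemma integral_comp_of_lipschitzWith (hK : ∀ x y₀, Integrable (fun y => dist y y₀) (K x))
    (hC : ∀ x y, W1 (K x) (K y) ≤ C * edist x y) {μ : Measure α} [IsProbabilityMeasure μ]
    (hμ : ∀ x₀, Integrable (fun x => dist x x₀) μ) {g : β → ℝ} (hg : LipschitzWith 1 g) :
    ∫ y, g y ∂(K ∘ₘ μ) = ∫ x, ∫ y, g y ∂K x ∂μ := by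
  obtain ⟨x₀⟩ := nonempty_of_isProbabilityMeasure μ
  obtain ⟨y₀⟩ := nonempty_of_isProbabilityMeasure (K x₀)
  have hnorm : LipschitzWith 1 (fun y => ‖g y‖) :=
    (lipschitzWith_one_norm.comp hg).weaken (one_mul 1).le
  have hint : Integrable g (K ∘ₘ μ) :=
    (Measure.integrable_comp_iff hg.continuous.aestronglyMeasurable).2
      ⟨ae_of_all _ fun x => integrable_of_lipschitzWith (hK x y₀) hg,
        integrable_of_lipschitzWith (hμ x₀) (lipschitzWith_integral_kernel hC hnorm)⟩
  rw [Measure.comp_eq_comp_const_apply] at hint ⊢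
  rw [Kernel.integral_comp hint]
  simp

lemma W1_comp_le_mul (hK : ∀ x y₀, Integrable (fun y => dist y y₀) (K x))
    (hC : ∀ x y, W1 (K x) (K y) ≤ C * edist x y)
    {μ ν : Measure α} [IsProbabilityMeasure μ] [IsProbabilityMeasure ν]
    (hμ : ∀ x₀, Integrable (fun x => dist x x₀) μ) (hν : ∀ x₀, Integrable (fun x => dist x x₀) ν) :
    W1 (K ∘ₘ μ) (K ∘ₘ ν) ≤ C * W1 μ ν := by
  rw [W1_eq_iSup_edist]
  refine iSup_le fun g => ?_
  rw [integral_comp_of_lipschitzWith hK hC hμ g.2, integral_comp_of_lipschitzWith hK hC hν g.2]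
  exact edist_integral_le_mul_W1 μ ν (lipschitzWith_integral_kernel hC g.2)

end Kernel

/-- For a Markov kernel `K` (whose values have finite first moments),
the Wasserstein contraction coefficient over probability measures with finite first
moments, `sup_{μ≠ν} W₁(μK,νK)/W₁(μ,ν)`, equals `sup_{x≠y} W₁(K(x,·),K(y,·))/d(x,y)`. -/
theorem stmt7 {α : Type*} [MetricSpace α] [MeasurableSpace α] [BorelSpace α]
    (K : ProbabilityTheory.Kernel α α) [ProbabilityTheory.IsMarkovKernel K]
    (hK : ∀ x x₀, Integrable (fun y => dist y x₀) (K x)) :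
    (⨆ q : {p : Measure α × Measure α //
        (IsProbabilityMeasure p.1 ∧ ∀ x₀, Integrable (fun x => dist x x₀) p.1) ∧
        (IsProbabilityMeasure p.2 ∧ ∀ x₀, Integrable (fun x => dist x x₀) p.2) ∧
        p.1 ≠ p.2},
      W1 (q.val.1.bind fun x => K x) (q.val.2.bind fun x => K x) / W1 q.val.1 q.val.2) =
    ⨆ q : {p : α × α // p.1 ≠ p.2},
      W1 (K q.val.1) (K q.val.2) / edist q.val.1 q.val.2 := by
  set C := ⨆ q : {p : α × α // p.1 ≠ p.2}, W1 (K q.val.1) (K q.val.2) / edist q.val.1 q.val.2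
  have hdirac (z x₀ : α) : Integrable (fun x => dist x x₀) (Measure.dirac z) :=
    integrable_dirac enorm_lt_top
  refine le_antisymm (iSup_le fun ⟨⟨μ, ν⟩, ⟨hμ, hμm⟩, ⟨hν, hνm⟩, _⟩ => ?_)
    (iSup_le fun ⟨⟨x, y⟩, hxy⟩ => ?_)
  · rcases eq_or_ne C ⊤ with hC | hC
    · exact hC ▸ le_top
    have hKC (x y : α) : W1 (K x) (K y) ≤ C.toNNReal * edist x y := by
      rw [ENNReal.coe_toNNReal hC]
      exact le_iSup_div_edist_mul_edist (fun x y => W1 (K x) (K y)) (fun x => W1_self _) x y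
    refine ENNReal.div_le_of_le_mul ?_
    rw [← ENNReal.coe_toNNReal hC]
    exact W1_comp_le_mul hK hKC hμm hνm
  · refine le_iSup_of_le ⟨(Measure.dirac x, Measure.dirac y), ⟨inferInstance, hdirac x⟩,
      ⟨inferInstance, hdirac y⟩, dirac_ne_dirac hxy⟩ ?_
    dsimp only
    rw [Measure.dirac_bind K.measurable, Measure.dirac_bind K.measurable, W1_dirac]
end

section
/- Let E ⊂ ℝ^d be compact, G : E × E → ℝ an interaction potential with G(x,y) ≥ ε > 0 and ‖G‖_{Lip,∞} := sup_y ‖G(·,y)‖_Lip < ∞. Then for any probability measure μ on E and all x, y ∈ E, W₁(Ψ_{G(x,·)}(μ), Ψ_{G(y,·)}(μ)) ≤ (2‖G‖_{Lip,∞} · diam(E) / ε) · d(x,y). -/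
open MeasureTheory
open scoped ENNReal NNReal

/-- 1-Wasserstein distance on `ℝ^d` with the ℓ¹ ground metric (Kantorovich duality). -/
noncomputable def W1l1 {d : ℕ} (μ ν : Measure (Fin d → ℝ)) : ℝ≥0∞ :=
  ⨆ g : {f : (Fin d → ℝ) → ℝ // ∀ x y, |f x - f y| ≤ ∑ i, |x i - y i|},
    ENNReal.ofReal |(∫ x, g.val x ∂μ) - ∫ x, g.val x ∂ν|

/-- The Boltzmann–Gibbs transformation `Ψ_G(μ)(dy) = G(y)μ(dy)/μ(G)`. -/
noncomputable def BG {d : ℕ} (G : (Fin d → ℝ) → ℝ) (μ : Measure (Fin d → ℝ)) :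
    Measure (Fin d → ℝ) :=
  ((μ.withDensity fun y => ENNReal.ofReal (G y)) Set.univ)⁻¹ •
    μ.withDensity fun y => ENNReal.ofReal (G y)

/-- Elementary fraction estimate used in the proof of `stmt10`. -/
lemma stmt10_aux (ε D c Zx Zy P Q : ℝ) (hε : 0 < ε) (hc : 0 ≤ c) (hD : 0 ≤ D)
    (hZx : ε ≤ Zx) (hZy : ε ≤ Zy)
    (hPQ : |P - Q| ≤ c * D) (hQ : |Q| ≤ D * Zy) (hZ : |Zx - Zy| ≤ c) :
    |P / Zx - Q / Zy| ≤ 2 * c * D / ε := by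
  have hZx0 : 0 < Zx := lt_of_lt_of_le hε hZx
  have hZy0 : 0 < Zy := lt_of_lt_of_le hε hZy
  have hsplit : P / Zx - Q / Zy = (P - Q) / Zx + Q * (Zy - Zx) / (Zx * Zy) := by
    field_simp
    ring
  have h1 : |(P - Q) / Zx| ≤ c * D / ε := by
    rw [abs_div, abs_of_pos hZx0]
    exact div_le_div₀ (by positivity) hPQ hε hZx
  have h2 : |Q * (Zy - Zx) / (Zx * Zy)| ≤ c * D / ε := by
    rw [abs_div, abs_of_pos (mul_pos hZx0 hZy0), abs_mul]
    have hnum : |Q| * |Zy - Zx| ≤ D * Zy * c := by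
      have h' : |Zy - Zx| ≤ c := by rwa [abs_sub_comm]
      exact mul_le_mul hQ h' (abs_nonneg _) (by positivity)
    have hden : (0 : ℝ) < ε * Zy := by positivity
    have hden' : ε * Zy ≤ Zx * Zy := by
      exact mul_le_mul_of_nonneg_right hZx (le_of_lt hZy0)
    calc |Q| * |Zy - Zx| / (Zx * Zy) ≤ (D * Zy * c) / (ε * Zy) :=
          div_le_div₀ (by positivity) hnum hden hden'
      _ = c * D / ε := by
          field_simp
  calc |P / Zx - Q / Zy| = |(P - Q) / Zx + Q * (Zy - Zx) / (Zx * Zy)| := by rw [hsplit]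
    _ ≤ |(P - Q) / Zx| + |Q * (Zy - Zx) / (Zx * Zy)| := abs_add_le _ _
    _ ≤ c * D / ε + c * D / ε := add_le_add h1 h2
    _ = 2 * c * D / ε := by ring

/-- For `E ⊂ ℝ^d` compact, an interaction potential `G ≥ ε > 0` with
`sup_y ‖G(·,y)‖_Lip ≤ KG` (ℓ¹) and ℓ¹-diameter of `E` at most `D`, for any
probability measure `μ` on `E` and `x, y ∈ E`,
`W₁(Ψ_{G(x,·)}(μ), Ψ_{G(y,·)}(μ)) ≤ (2·KG·D/ε)·d(x,y)`. -/
theorem stmt10 {d : ℕ} (E : Set (Fin d → ℝ)) (hE : IsCompact E)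
    (G : (Fin d → ℝ) → (Fin d → ℝ) → ℝ) (hGmeas : ∀ x, Measurable (G x))
    (ε : ℝ) (hε : 0 < ε) (hGε : ∀ x ∈ E, ∀ y ∈ E, ε ≤ G x y)
    (KG : ℝ) (hKG : 0 ≤ KG)
    (hGLip : ∀ y ∈ E, ∀ x ∈ E, ∀ x' ∈ E, |G x y - G x' y| ≤ KG * ∑ i, |x i - x' i|)
    (D : ℝ) (hD : ∀ x ∈ E, ∀ y ∈ E, ∑ i, |x i - y i| ≤ D)
    (μ : Measure (Fin d → ℝ)) [IsProbabilityMeasure μ] (hμE : μ E = 1)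
    (x y : Fin d → ℝ) (hx : x ∈ E) (hy : y ∈ E) :
    W1l1 (BG (G x) μ) (BG (G y) μ)
      ≤ ENNReal.ofReal (2 * KG * D / ε * ∑ i, |x i - y i|) := by
  classical
  set δ : ℝ := ∑ i, |x i - y i| with hδdef
  have hδ0 : 0 ≤ δ := Finset.sum_nonneg fun i _ => abs_nonneg _
  have hD0 : 0 ≤ D := by
    have h := hD x hx x hx
    simpa using h
  have hEmeas : MeasurableSet E := hE.isClosed.measurableSet
  have haeE : ∀ᵐ z ∂μ, z ∈ E := by
    have hcompl : μ Eᶜ = 0 := by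
      have h1 : μ Eᶜ = μ Set.univ - μ E := measure_compl hEmeas (measure_ne_top μ E)
      simp [h1, hμE]
    rw [ae_iff]
    simpa [Set.compl_def] using hcompl
  set Zx : ℝ≥0∞ := ∫⁻ z, ENNReal.ofReal (G x z) ∂μ with hZxdef
  set Zy : ℝ≥0∞ := ∫⁻ z, ENNReal.ofReal (G y z) ∂μ with hZydef
  have htot : ∀ a : Fin d → ℝ,
      (μ.withDensity fun z => ENNReal.ofReal (G a z)) Set.univ
        = ∫⁻ z, ENNReal.ofReal (G a z) ∂μ := by
    intro a
    rw [withDensity_apply _ MeasurableSet.univ, setLIntegral_univ]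
  -- comparison of normalizers
  have hZcomp : ∀ a ∈ E, ∀ b ∈ E,
      (∫⁻ z, ENNReal.ofReal (G a z) ∂μ)
        ≤ (∫⁻ z, ENNReal.ofReal (G b z) ∂μ) + ENNReal.ofReal (KG * ∑ i, |a i - b i|) := by
    intro a ha b hb
    have hmono : ∀ᵐ z ∂μ, ENNReal.ofReal (G a z)
        ≤ ENNReal.ofReal (G b z) + ENNReal.ofReal (KG * ∑ i, |a i - b i|) := by
      filter_upwards [haeE] with z hz
      have hlip := hGLip z hz a ha b hb
      have h1 : G a z ≤ G b z + KG * ∑ i, |a i - b i| := by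
        have := abs_le.mp hlip
        linarith [this.2]
      calc ENNReal.ofReal (G a z) ≤ ENNReal.ofReal (G b z + KG * ∑ i, |a i - b i|) :=
            ENNReal.ofReal_le_ofReal h1
        _ ≤ ENNReal.ofReal (G b z) + ENNReal.ofReal (KG * ∑ i, |a i - b i|) :=
            ENNReal.ofReal_add_le
    calc (∫⁻ z, ENNReal.ofReal (G a z) ∂μ)
        ≤ ∫⁻ z, (ENNReal.ofReal (G b z) + ENNReal.ofReal (KG * ∑ i, |a i - b i|)) ∂μ :=
          lintegral_mono_ae hmono
      _ = (∫⁻ z, ENNReal.ofReal (G b z) ∂μ) + ENNReal.ofReal (KG * ∑ i, |a i - b i|) := by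
          rw [lintegral_add_right _ measurable_const, lintegral_const, measure_univ, mul_one]
  by_cases hfin : Zx = ∞
  · -- degenerate case: both measures are zero
    have hZyinf : Zy = ∞ := by
      by_contra hZy
      have := hZcomp x hx y hy
      rw [← hZxdef, ← hZydef, hfin] at this
      exact (ENNReal.add_ne_top.mpr ⟨hZy, ENNReal.ofReal_ne_top⟩) (top_le_iff.mp this)
    have hBx : BG (G x) μ = 0 := by
      rw [BG, htot x, ← hZxdef, hfin]
      simp
    have hBy : BG (G y) μ = 0 := by
      rw [BG, htot y, ← hZydef, hZyinf]
      simp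
    rw [hBx, hBy, W1l1]
    refine iSup_le fun g => ?_
    simp
  · -- main case
    have hZyfin : Zy ≠ ∞ := by
      intro hZy
      have := hZcomp y hy x hx
      rw [← hZxdef, ← hZydef, hZy] at this
      exact (ENNReal.add_ne_top.mpr ⟨hfin, ENNReal.ofReal_ne_top⟩) (top_le_iff.mp this)
    -- real-valued facts
    have hint : ∀ a ∈ E, Integrable (G a) μ ∧ ε ≤ ∫ z, G a z ∂μ := by
      intro a ha
      have hZafin : (∫⁻ z, ENNReal.ofReal (G a z) ∂μ) ≠ ∞ := by
        intro htop
        have := hZcomp a ha x hx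
        rw [← hZxdef, htop] at this
        exact (ENNReal.add_ne_top.mpr ⟨hfin, ENNReal.ofReal_ne_top⟩) (top_le_iff.mp this)
      have hIa : Integrable (G a) μ := by
        refine ⟨(hGmeas a).aestronglyMeasurable, ?_⟩
        rw [hasFiniteIntegral_iff_norm]
        have heq : (∫⁻ z, ENNReal.ofReal ‖G a z‖ ∂μ) = ∫⁻ z, ENNReal.ofReal (G a z) ∂μ := by
          refine lintegral_congr_ae ?_
          filter_upwards [haeE] with z hz
          rw [Real.norm_eq_abs, abs_of_pos (lt_of_lt_of_le hε (hGε a ha z hz))]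
        rw [heq]
        exact lt_top_iff_ne_top.mpr hZafin
      refine ⟨hIa, ?_⟩
      have : (∫ z, (ε : ℝ) ∂μ) ≤ ∫ z, G a z ∂μ := by
        refine integral_mono_ae (integrable_const ε) hIa ?_
        filter_upwards [haeE] with z hz
        exact hGε a ha z hz
      simpa using this
    obtain ⟨hIx, hZxε⟩ := hint x hx
    obtain ⟨hIy, hZyε⟩ := hint y hy
    set Zx' : ℝ := ∫ z, G x z ∂μ with hZx'def
    set Zy' : ℝ := ∫ z, G y z ∂μ with hZy'def
    have hZx'0 : 0 < Zx' := lt_of_lt_of_le hε hZxε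
    have hZy'0 : 0 < Zy' := lt_of_lt_of_le hε hZyε
    have hZ'eq : ∀ a ∈ E, Integrable (G a) μ →
        (∫⁻ z, ENNReal.ofReal (G a z) ∂μ).toReal = ∫ z, G a z ∂μ := by
      intro a ha hIa
      rw [integral_eq_lintegral_of_nonneg_ae ?_ (hGmeas a).aestronglyMeasurable]
      · filter_upwards [haeE] with z hz
        exact le_of_lt (lt_of_lt_of_le hε (hGε a ha z hz))
    have hZxeq : Zx.toReal = Zx' := hZ'eq x hx hIx
    have hZyeq : Zy.toReal = Zy' := hZ'eq y hy hIy
    -- representation of integrals against BG measures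
    have hrep : ∀ a : Fin d → ℝ, a ∈ E → ∀ g : (Fin d → ℝ) → ℝ, Measurable g →
        ∫ z, g z ∂(BG (G a) μ)
          = ((∫⁻ z, ENNReal.ofReal (G a z) ∂μ).toReal)⁻¹ * ∫ z, G a z * g z ∂μ := by
      intro a ha g hg
      rw [BG, htot a, integral_smul_measure, ENNReal.toReal_inv]
      congr 1
      have hd : (fun z => ENNReal.ofReal (G a z))
          = fun z => ((Real.toNNReal (G a z) : ℝ≥0) : ℝ≥0∞) := rfl
      rw [hd, integral_withDensity_eq_integral_smul (hGmeas a).real_toNNReal g]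
      refine integral_congr_ae ?_
      filter_upwards [haeE] with z hz
      have h0 : 0 ≤ G a z := le_of_lt (lt_of_lt_of_le hε (hGε a ha z hz))
      simp [NNReal.smul_def, Real.coe_toNNReal _ h0]
    -- main estimate
    rw [W1l1]
    refine iSup_le fun g => ?_
    apply ENNReal.ofReal_le_ofReal
    have hgcont : Continuous g.1 := by
      have hlip : LipschitzWith d g.1 := by
        apply LipschitzWith.of_dist_le_mul
        intro a b
        rw [Real.dist_eq]
        calc |g.1 a - g.1 b| ≤ ∑ i, |a i - b i| := g.2 a b
          _ ≤ ∑ _i : Fin d, dist a b := by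
              refine Finset.sum_le_sum fun i _ => ?_
              have := dist_le_pi_dist a b i
              rwa [Real.dist_eq] at this
          _ = (d : ℝ) * dist a b := by simp [mul_comm]
      exact hlip.continuous
    have hgmeas : Measurable g.1 := hgcont.measurable
    set gt : (Fin d → ℝ) → ℝ := fun z => g.1 z - g.1 x with hgtdef
    have hgtmeas : Measurable gt := hgmeas.sub measurable_const
    have hgtbound : ∀ᵐ z ∂μ, |gt z| ≤ D := by
      filter_upwards [haeE] with z hz
      calc |gt z| = |g.1 z - g.1 x| := rfl
        _ ≤ ∑ i, |z i - x i| := g.2 z x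
        _ ≤ D := hD z hz x hx
    have hintGgt : ∀ a ∈ E, Integrable (G a) μ → Integrable (fun z => G a z * gt z) μ := by
      intro a ha hIa
      refine Integrable.mono' (hIa.abs.const_mul D)
        (((hGmeas a).mul hgtmeas).aestronglyMeasurable) ?_
      filter_upwards [hgtbound] with z hz
      rw [Real.norm_eq_abs, abs_mul]
      calc |G a z| * |gt z| ≤ |G a z| * D :=
            mul_le_mul_of_nonneg_left hz (abs_nonneg _)
        _ = D * |G a z| := mul_comm _ _
    have hIxg := hintGgt x hx hIx
    have hIyg := hintGgt y hy hIy
    set P : ℝ := ∫ z, G x z * gt z ∂μ with hPdef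
    set Q : ℝ := ∫ z, G y z * gt z ∂μ with hQdef
    -- bound |P - Q|
    have hGdiff : ∀ᵐ z ∂μ, |G x z - G y z| ≤ KG * δ := by
      filter_upwards [haeE] with z hz
      exact hGLip z hz x hx y hy
    have hPQ : |P - Q| ≤ (KG * δ) * D := by
      rw [hPdef, hQdef, ← integral_sub hIxg hIyg]
      have hre : (fun z => G x z * gt z - G y z * gt z)
          = fun z => (G x z - G y z) * gt z := by
        funext z; ring
      rw [hre]
      have := norm_integral_le_of_norm_le_const (μ := μ)
        (f := fun z => (G x z - G y z) * gt z) (C := KG * δ * D) ?_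
      · simpa [Real.norm_eq_abs] using this
      · filter_upwards [hGdiff, hgtbound] with z h1 h2
        rw [Real.norm_eq_abs, abs_mul]
        exact mul_le_mul h1 h2 (abs_nonneg _) (by positivity)
    -- bound |Q|
    have hQb : |Q| ≤ D * Zy' := by
      have h1 : |Q| ≤ ∫ z, |G y z| * |gt z| ∂μ := by
        simpa [Real.norm_eq_abs, abs_mul] using
          norm_integral_le_integral_norm (μ := μ) (fun z => G y z * gt z)
      have h2 : (∫ z, |G y z| * |gt z| ∂μ) ≤ ∫ z, G y z * D ∂μ := by
        have habs : Integrable (fun z => |G y z| * |gt z|) μ := by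
          simpa [abs_mul] using hIyg.abs
        refine integral_mono_ae habs (hIy.mul_const D) ?_
        filter_upwards [haeE, hgtbound] with z hz hb
        have h0 : 0 ≤ G y z := le_of_lt (lt_of_lt_of_le hε (hGε y hy z hz))
        rw [abs_of_nonneg h0]
        exact mul_le_mul_of_nonneg_left hb h0
      have h3 : (∫ z, G y z * D ∂μ) = Zy' * D := integral_mul_const D (G y)
      calc |Q| ≤ ∫ z, G y z * D ∂μ := le_trans h1 h2
        _ = D * Zy' := by rw [h3, mul_comm]
    -- bound |Zx' - Zy'|
    have hZdiff : |Zx' - Zy'| ≤ KG * δ := by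
      rw [hZx'def, hZy'def, ← integral_sub hIx hIy]
      have := norm_integral_le_of_norm_le_const (μ := μ)
        (f := fun z => G x z - G y z) (C := KG * δ) ?_
      · simpa [Real.norm_eq_abs] using this
      · filter_upwards [hGdiff] with z h1
        rwa [Real.norm_eq_abs]
    -- express the two integrals
    have hrx : ∫ z, g.1 z ∂(BG (G x) μ) = Zx'⁻¹ * ∫ z, G x z * g.1 z ∂μ := by
      rw [hrep x hx g.1 hgmeas, hZxeq]
    have hry : ∫ z, g.1 z ∂(BG (G y) μ) = Zy'⁻¹ * ∫ z, G y z * g.1 z ∂μ := by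
      rw [hrep y hy g.1 hgmeas, hZyeq]
    have hsplitint : ∀ a ∈ E, Integrable (G a) μ → Integrable (fun z => G a z * gt z) μ →
        (∫ z, G a z * g.1 z ∂μ) = (∫ z, G a z * gt z ∂μ) + g.1 x * ∫ z, G a z ∂μ := by
      intro a ha hIa hIag
      have h1 : (∫ z, G a z * g.1 z ∂μ)
          = ∫ z, (G a z * gt z + G a z * g.1 x) ∂μ := by
        refine integral_congr_ae (Filter.Eventually.of_forall fun z => ?_)
        simp only [hgtdef]
        ring
      rw [h1, integral_add hIag (hIa.mul_const (g.1 x)), integral_mul_const]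
      ring
    have hdiff : (∫ z, g.1 z ∂(BG (G x) μ)) - (∫ z, g.1 z ∂(BG (G y) μ))
        = P / Zx' - Q / Zy' := by
      rw [hrx, hry, hsplitint x hx hIx hIxg, hsplitint y hy hIy hIyg,
        ← hZx'def, ← hZy'def, ← hPdef, ← hQdef]
      field_simp
      ring
    rw [hdiff]
    have hmain := stmt10_aux ε D (KG * δ) Zx' Zy' P Q hε (by positivity) hD0
      hZxε hZyε hPQ hQb hZdiff
    calc |P / Zx' - Q / Zy'| ≤ 2 * (KG * δ) * D / ε := hmain
      _ = 2 * KG * D / ε * δ := by ring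
end

section
/- Let E ⊂ ℝ^d be compact and convex, K = {k₁,…,k_N} ⊂ E, G : E × E → ℝ with G ≥ ε > 0 and ‖G‖_{Lip,∞} := sup_y ‖G(·,y)‖_Lip < ∞ (Lipschitz in the ℓ¹ norm). Define Attention(q,K,K) = Σ_i [G(q,k_i)/Σ_j G(q,k_j)] k_i. Then for all q₁, q₂ ∈ E: ‖Attention(q₁,K,K) − Attention(q₂,K,K)‖₂ ≤ d^{3/2} · (2‖G‖_{Lip,∞} diam(E)/ε) · ‖q₁ − q₂‖₂. -/
/-!
The attention weights `wⱼ(q) = G(q,kⱼ) / Σₚ G(q,kₚ)` sum to one, so the difference of the two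
outputs is `Σⱼ (wⱼ(q₁) - wⱼ(q₂)) (kⱼ - q₁)`, whose ℓ¹-norm is at most `diam E · Σⱼ |Δwⱼ|`.
Normalising a vector bounded below by `ε` is `2/ε`-Lipschitz from ℓ^∞ to ℓ¹, and the Lipschitz
bound on `G` controls the ℓ^∞-distance of the unnormalised weights by `‖G‖_Lip ‖q₁ - q₂‖₁`.
Comparing the ℓ¹- and ℓ²-norms on both sides costs a factor `√d ≤ d^{3/2}`.
-/

open Finset

lemma sqrt_sum_sq_le_sum_abs {ι : Type*} [Fintype ι] (x : ι → ℝ) :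
    √(∑ i, x i ^ 2) ≤ ∑ i, |x i| := by
  refine Real.sqrt_le_iff.mpr ⟨sum_nonneg fun i _ => abs_nonneg _, ?_⟩
  simpa only [sq_abs] using sum_sq_le_sq_sum_of_nonneg (s := univ) fun i _ => abs_nonneg (x i)

lemma sum_abs_le_sqrt_card_mul_sqrt_sum_sq {ι : Type*} [Fintype ι] (x : ι → ℝ) :
    ∑ i, |x i| ≤ √(Fintype.card ι) * √(∑ i, x i ^ 2) := by
  rw [← Real.sqrt_mul (Nat.cast_nonneg _)]
  refine Real.le_sqrt_of_sq_le ?_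
  simpa only [sq_abs, card_univ] using sq_sum_le_card_mul_sum_sq (s := univ) (f := fun i => |x i|)

lemma sum_div_sum_self {ι : Type*} [Fintype ι] {a : ι → ℝ} (h : ∑ p, a p ≠ 0) :
    ∑ j, a j / ∑ p, a p = 1 := by
  rw [← sum_div, div_self h]

theorem sum_abs_div_sum_sub_div_sum_le {ι : Type*} [Fintype ι] [Nonempty ι] {a b : ι → ℝ}
    {ε δ : ℝ} (hε : 0 < ε) (ha : ∀ j, ε ≤ a j) (hb : ∀ j, ε ≤ b j)
    (hab : ∀ j, |a j - b j| ≤ δ) :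
    ∑ j, |a j / ∑ p, a p - b j / ∑ p, b p| ≤ 2 * δ / ε := by
  set A := ∑ p, a p
  set B := ∑ p, b p
  have hA : 0 < A := sum_pos (fun j _ => hε.trans_le (ha j)) univ_nonempty
  have hB : 0 < B := sum_pos (fun j _ => hε.trans_le (hb j)) univ_nonempty
  have hδ : 0 ≤ δ := (abs_nonneg _).trans (hab (Classical.arbitrary ι))
  have hsum : ∑ j, |a j - b j| ≤ δ / ε * A := by
    rw [mul_sum]
    gcongr with j
    calc |a j - b j| ≤ δ := hab j
      _ = δ / ε * ε := by field_simp
      _ ≤ δ / ε * a j := by gcongr; exact ha j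
  have hBA : |B - A| ≤ ∑ j, |a j - b j| := by
    rw [abs_sub_comm, ← sum_sub_distrib]
    exact abs_sum_le_sum_abs _ _
  calc ∑ j, |a j / A - b j / B|
      ≤ ∑ j, (|a j - b j| / A + b j / B * (|B - A| / A)) := by
        gcongr with j
        have hbj : 0 < b j := hε.trans_le (hb j)
        rw [show a j / A - b j / B = (a j - b j) / A + b j / B * ((B - A) / A) by
          field_simp; ring]
        refine (abs_add_le _ _).trans_eq ?_
        rw [abs_div, abs_mul, abs_div, abs_div, abs_of_pos hA, abs_of_pos hB, abs_of_pos hbj]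
    _ = (∑ j, |a j - b j|) / A + |B - A| / A := by
        rw [sum_add_distrib, ← sum_div, ← sum_mul, sum_div_sum_self hB.ne', one_mul]
    _ ≤ 2 * (δ / ε * A) / A := by
        rw [← add_div]
        gcongr
        linarith
    _ = 2 * δ / ε := by field_simp

theorem norm_sum_smul_le_of_sum_eq_zero {ι E : Type*} [Fintype ι] [SeminormedAddCommGroup E]
    [NormedSpace ℝ E] {c : ι → ℝ} (hc : ∑ j, c j = 0) (v : ι → E) (x : E) {R : ℝ}
    (hR : ∀ j, ‖v j - x‖ ≤ R) :
    ‖∑ j, c j • v j‖ ≤ (∑ j, |c j|) * R := by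
  have hshift : ∑ j, c j • v j = ∑ j, c j • (v j - x) := by
    simp only [smul_sub, sum_sub_distrib, ← sum_smul, hc, zero_smul, sub_zero]
  rw [hshift, sum_mul]
  refine (norm_sum_le _ _).trans (sum_le_sum fun j _ => ?_)
  rw [norm_smul, Real.norm_eq_abs]
  exact mul_le_mul_of_nonneg_left (hR j) (abs_nonneg _)

theorem sum_abs_sum_mul_sub_sum_mul_le {ι κ : Type*} [Fintype ι] [Fintype κ] {α β : ι → ℝ}
    (hαβ : ∑ j, α j = ∑ j, β j) (v : ι → κ → ℝ) (x : κ → ℝ) {R : ℝ}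
    (hR : ∀ j, ∑ i, |v j i - x i| ≤ R) :
    ∑ i, |∑ j, α j * v j i - ∑ j, β j * v j i| ≤ (∑ j, |α j - β j|) * R := by
  have hc : ∑ j, (α j - β j) = 0 := by rw [sum_sub_distrib, hαβ, sub_self]
  have := norm_sum_smul_le_of_sum_eq_zero hc (fun j => WithLp.toLp 1 (v j)) (WithLp.toLp 1 x)
    fun j => by simpa [PiLp.norm_eq_of_L1] using hR j
  simpa [PiLp.norm_eq_of_L1, ← WithLp.toLp_sum, ← sum_sub_distrib, sub_mul] using this

theorem stmt13_general (d N : ℕ) (hN : 1 ≤ N) (E : Set (Fin d → ℝ))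
    (k : Fin N → Fin d → ℝ) (hk : ∀ i, k i ∈ E)
    (G : (Fin d → ℝ) → (Fin d → ℝ) → ℝ)
    (ε : ℝ) (hε : 0 < ε) (hGε : ∀ x ∈ E, ∀ y ∈ E, ε ≤ G x y)
    (KG : ℝ) (hKG : 0 ≤ KG)
    (hGLip : ∀ y ∈ E, ∀ x ∈ E, ∀ x' ∈ E, |G x y - G x' y| ≤ KG * ∑ i, |x i - x' i|)
    (D : ℝ) (hD : ∀ x ∈ E, ∀ y ∈ E, (∑ i, |x i - y i|) ≤ D)
    (q₁ q₂ : Fin d → ℝ) (hq₁ : q₁ ∈ E) (hq₂ : q₂ ∈ E) :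
    Real.sqrt (∑ i, ((∑ j, (G q₁ (k j) / ∑ p, G q₁ (k p)) * k j i)
        - ∑ j, (G q₂ (k j) / ∑ p, G q₂ (k p)) * k j i) ^ 2)
      ≤ (d : ℝ) ^ ((3 : ℝ) / 2) * (2 * KG * D / ε)
        * Real.sqrt (∑ i, (q₁ i - q₂ i) ^ 2) := by
  have : Nonempty (Fin N) := ⟨⟨0, hN⟩⟩
  have hGk : ∀ q ∈ E, ∀ j, ε ≤ G q (k j) := fun q hq j => hGε q hq (k j) (hk j)
  have hS : ∀ q ∈ E, ∑ p, G q (k p) ≠ 0 := fun q hq =>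
    (sum_pos (fun j _ => hε.trans_le (hGk q hq j)) univ_nonempty).ne'
  have hweights := sum_abs_div_sum_sub_div_sum_le hε (hGk q₁ hq₁) (hGk q₂ hq₂)
    fun j => hGLip (k j) (hk j) q₁ hq₁ q₂ hq₂
  have houtputs := sum_abs_sum_mul_sub_sum_mul_le
    ((sum_div_sum_self (hS q₁ hq₁)).trans (sum_div_sum_self (hS q₂ hq₂)).symm) k q₁
    fun j => hD (k j) (hk j) q₁ hq₁
  have hD0 : 0 ≤ D := by simpa using hD q₁ hq₁ q₁ hq₁
  have hsqrt_d : √(d : ℝ) ≤ (d : ℝ) ^ ((3 : ℝ) / 2) := by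
    rw [Real.sqrt_eq_rpow]
    rcases Nat.eq_zero_or_pos d with rfl | hd
    · norm_num
    · exact Real.rpow_le_rpow_of_exponent_le (by exact_mod_cast hd) (by norm_num)
  calc _ ≤ _ := sqrt_sum_sq_le_sum_abs _
    _ ≤ 2 * (KG * ∑ i, |q₁ i - q₂ i|) / ε * D := houtputs.trans (by gcongr)
    _ = 2 * KG * D / ε * ∑ i, |q₁ i - q₂ i| := by ring
    _ ≤ 2 * KG * D / ε * (√d * √(∑ i, (q₁ i - q₂ i) ^ 2)) := by
        gcongr
        simpa using sum_abs_le_sqrt_card_mul_sqrt_sum_sq (q₁ - q₂)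
    _ ≤ 2 * KG * D / ε * ((d : ℝ) ^ ((3 : ℝ) / 2) * √(∑ i, (q₁ i - q₂ i) ^ 2)) := by gcongr
    _ = _ := by ring

/-- Corollary 4.6: For `E ⊂ ℝ^d` compact convex, keys
`k₁,…,k_N ∈ E`, `G ≥ ε > 0` with `sup_y ‖G(·,y)‖_Lip ≤ KG` (ℓ¹) and ℓ¹-diameter
of `E` at most `D`, self-attention `q ↦ Σᵢ [G(q,kᵢ)/Σⱼ G(q,kⱼ)]·kᵢ` satisfies
`‖Att(q₁) − Att(q₂)‖₂ ≤ d^{3/2}·(2·KG·D/ε)·‖q₁ − q₂‖₂`. -/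
theorem stmt13 (d N : ℕ) (hN : 1 ≤ N) (E : Set (Fin d → ℝ))
    (hE : IsCompact E) (hconv : Convex ℝ E)
    (k : Fin N → Fin d → ℝ) (hk : ∀ i, k i ∈ E)
    (G : (Fin d → ℝ) → (Fin d → ℝ) → ℝ)
    (ε : ℝ) (hε : 0 < ε) (hGε : ∀ x ∈ E, ∀ y ∈ E, ε ≤ G x y)
    (KG : ℝ) (hKG : 0 ≤ KG)
    (hGLip : ∀ y ∈ E, ∀ x ∈ E, ∀ x' ∈ E, |G x y - G x' y| ≤ KG * ∑ i, |x i - x' i|)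
    (D : ℝ) (hD : ∀ x ∈ E, ∀ y ∈ E, (∑ i, |x i - y i|) ≤ D)
    (q₁ q₂ : Fin d → ℝ) (hq₁ : q₁ ∈ E) (hq₂ : q₂ ∈ E) :
    Real.sqrt (∑ i, ((∑ j, (G q₁ (k j) / ∑ p, G q₁ (k p)) * k j i)
        - ∑ j, (G q₂ (k j) / ∑ p, G q₂ (k p)) * k j i) ^ 2)
      ≤ (d : ℝ) ^ ((3 : ℝ) / 2) * (2 * KG * D / ε)
        * Real.sqrt (∑ i, (q₁ i - q₂ i) ^ 2) :=
  stmt13_general d N hN E k hk G ε hε hGε KG hKG hGLip D hD q₁ q₂ hq₁ hq₂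
end
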